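/- Let F be an algebraically closed field, f(ξ) ∈ F[ξ] a nonzero polynomial of degree n > 1 with zero constant term, and c an element of the split octonion algebra O over F. If there exist γ ∈ F and an F-algebra automorphism g of O with g(c) = γ·1 + u₁, then the set X = {x ∈ O : f(x) = c} has at most n elements. -/

import Mathlib

noncomputable section

/-- The split octonion algebra over `F`, given by Zorn vector matrices
`(x1, u; v, x2)` with `x1, x2 ∈ F` and `u, v ∈ F³`. -/
@[ext]
structure SplitOctonion (F : Type*) where
  x1 : F
  u : Fin 3 → F
  v : Fin 3 → F
  x2 : F

namespace SplitOctonion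

variable {F : Type*} [Field F]

/-- Dot product on `F³`. -/
def dot (x y : Fin 3 → F) : F := x 0 * y 0 + x 1 * y 1 + x 2 * y 2

/-- Cross product on `F³`. -/
def cross (x y : Fin 3 → F) : Fin 3 → F :=
  ![x 1 * y 2 - x 2 * y 1, x 2 * y 0 - x 0 * y 2, x 0 * y 1 - x 1 * y 0]

instance : Zero (SplitOctonion F) := ⟨⟨0, 0, 0, 0⟩⟩
instance : One (SplitOctonion F) := ⟨⟨1, 0, 0, 1⟩⟩
instance : Add (SplitOctonion F) :=
  ⟨fun x y => ⟨x.x1 + y.x1, x.u + y.u, x.v + y.v, x.x2 + y.x2⟩⟩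
instance : Neg (SplitOctonion F) := ⟨fun x => ⟨-x.x1, -x.u, -x.v, -x.x2⟩⟩
instance : SMul F (SplitOctonion F) :=
  ⟨fun c x => ⟨c * x.x1, c • x.u, c • x.v, c * x.x2⟩⟩

/-- Zorn vector matrix multiplication. -/
instance : Mul (SplitOctonion F) :=
  ⟨fun x y => ⟨x.x1 * y.x1 + dot x.u y.v,
    x.x1 • y.u + y.x2 • x.u - cross x.v y.v,
    y.x1 • x.v + x.x2 • y.v + cross x.u y.u,
    x.x2 * y.x2 + dot x.v y.u⟩⟩

@[simp] lemma zero_x1 : (0 : SplitOctonion F).x1 = 0 := rfl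
@[simp] lemma zero_u : (0 : SplitOctonion F).u = 0 := rfl
@[simp] lemma zero_v : (0 : SplitOctonion F).v = 0 := rfl
@[simp] lemma zero_x2 : (0 : SplitOctonion F).x2 = 0 := rfl
@[simp] lemma add_x1 (x y : SplitOctonion F) : (x + y).x1 = x.x1 + y.x1 := rfl
@[simp] lemma add_u (x y : SplitOctonion F) : (x + y).u = x.u + y.u := rfl
@[simp] lemma add_v (x y : SplitOctonion F) : (x + y).v = x.v + y.v := rfl
@[simp] lemma add_x2 (x y : SplitOctonion F) : (x + y).x2 = x.x2 + y.x2 := rfl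
@[simp] lemma neg_x1 (x : SplitOctonion F) : (-x).x1 = -x.x1 := rfl
@[simp] lemma neg_u (x : SplitOctonion F) : (-x).u = -x.u := rfl
@[simp] lemma neg_v (x : SplitOctonion F) : (-x).v = -x.v := rfl
@[simp] lemma neg_x2 (x : SplitOctonion F) : (-x).x2 = -x.x2 := rfl
@[simp] lemma smul_x1 (c : F) (x : SplitOctonion F) : (c • x).x1 = c * x.x1 := rfl
@[simp] lemma smul_u (c : F) (x : SplitOctonion F) : (c • x).u = c • x.u := rfl
@[simp] lemma smul_v (c : F) (x : SplitOctonion F) : (c • x).v = c • x.v := rfl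
@[simp] lemma smul_x2 (c : F) (x : SplitOctonion F) : (c • x).x2 = c * x.x2 := rfl

instance : AddCommGroup (SplitOctonion F) where
  add_assoc x y z := by ext <;> simp [add_assoc]
  zero_add x := by ext <;> simp
  add_zero x := by ext <;> simp
  add_comm x y := by ext <;> simp [add_comm]
  neg_add_cancel x := by ext <;> simp
  nsmul := nsmulRec
  zsmul := zsmulRec

instance : Module F (SplitOctonion F) where
  one_smul x := by ext <;> simp
  mul_smul c d x := by ext <;> simp [mul_assoc, mul_smul]
  smul_zero c := by ext <;> simp
  smul_add c x y := by ext <;> simp [mul_add, smul_add]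
  add_smul c d x := by ext <;> simp [add_mul, add_smul]
  zero_smul x := by ext <;> simp

/-- Powers of a single octonion (well defined by power-associativity). -/
def npow (x : SplitOctonion F) : ℕ → SplitOctonion F
  | 0 => 1
  | n + 1 => npow x n * x

instance : Pow (SplitOctonion F) ℕ := ⟨npow⟩

/-- Substitution of an octonion into a polynomial over `F`:
`f(x) = αₙ xⁿ + ⋯ + α₁ x + α₀ • 1`. -/
def peval (f : Polynomial F) (x : SplitOctonion F) : SplitOctonion F :=
  f.sum fun i c => c • x ^ i

/-- The octonion `e₁`. -/
def e1 : SplitOctonion F := ⟨1, 0, 0, 0⟩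
/-- The octonion `e₂`. -/
def e2 : SplitOctonion F := ⟨0, 0, 0, 1⟩
/-- The octonion `u₁`. -/
def u1 : SplitOctonion F := ⟨0, ![1, 0, 0], 0, 0⟩

/-- Conjugation on `O`. -/
def conj (x : SplitOctonion F) : SplitOctonion F := ⟨x.x2, -x.u, -x.v, x.x1⟩

/-- The norm of an octonion. -/
def normO (x : SplitOctonion F) : F := x.x1 * x.x2 - dot x.u x.v

/-- The trace of an octonion. -/
def trO (x : SplitOctonion F) : F := x.x1 + x.x2

/-- `g` is an `F`-algebra automorphism of `O`: a linear bijection preserving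
multiplication (and the unit). -/
def IsAlgAut (g : SplitOctonion F ≃ₗ[F] SplitOctonion F) : Prop :=
  g 1 = 1 ∧ ∀ x y, g (x * y) = g x * g y

end SplitOctonion

/-!
Since `x * x = trO x • x - normO x • 1`, every power of `x`, hence `f(x)`, lies in `span {1, x}`:
`f(x) = a + b x`. If `f(x) = γ + u₁`, then `b ≠ 0`, so `x = l + m u₁` lies in the subalgebra
spanned by `1` and `u₁`, a copy of the dual numbers (`u₁² = 0`), where
`f(l + m u₁) = f(l) + f'(l) m u₁`. Thus `f(l) = γ` and `m = f'(l)⁻¹`: each solution is determined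
by a root `l` of `f - γ`, of which there are at most `deg f`. An automorphism sending `c` to
`γ + u₁` maps the solutions of `f(x) = c` bijectively onto those of `f(x) = γ + u₁`.
-/

namespace SplitOctonion

open Polynomial Submodule

variable {F : Type*} [Field F]

@[simp] lemma one_x1 : (1 : SplitOctonion F).x1 = 1 := rfl
@[simp] lemma one_u : (1 : SplitOctonion F).u = 0 := rfl
@[simp] lemma one_v : (1 : SplitOctonion F).v = 0 := rfl
@[simp] lemma one_x2 : (1 : SplitOctonion F).x2 = 1 := rfl
@[simp] lemma mul_x1 (x y : SplitOctonion F) : (x * y).x1 = x.x1 * y.x1 + dot x.u y.v := rfl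
@[simp] lemma mul_u (x y : SplitOctonion F) :
    (x * y).u = x.x1 • y.u + y.x2 • x.u - cross x.v y.v := rfl
@[simp] lemma mul_v (x y : SplitOctonion F) :
    (x * y).v = y.x1 • x.v + x.x2 • y.v + cross x.u y.u := rfl
@[simp] lemma mul_x2 (x y : SplitOctonion F) : (x * y).x2 = x.x2 * y.x2 + dot x.v y.u := rfl
@[simp] lemma u1_x1 : (u1 : SplitOctonion F).x1 = 0 := rfl
@[simp] lemma u1_u : (u1 : SplitOctonion F).u = ![1, 0, 0] := rfl
@[simp] lemma u1_v : (u1 : SplitOctonion F).v = 0 := rfl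
@[simp] lemma u1_x2 : (u1 : SplitOctonion F).x2 = 0 := rfl

instance : Distrib (SplitOctonion F) where
  left_distrib x y z := by
    ext i <;> try fin_cases i
    all_goals simp [dot, cross, Matrix.vecHead, Matrix.vecTail]; ring
  right_distrib x y z := by
    ext i <;> try fin_cases i
    all_goals simp [dot, cross, Matrix.vecHead, Matrix.vecTail]; ring

instance : MulOneClass (SplitOctonion F) where
  one_mul x := by
    ext i <;> try fin_cases i
    all_goals simp [dot, cross]
  mul_one x := by
    ext i <;> try fin_cases i
    all_goals simp [dot, cross]

instance : IsScalarTower F (SplitOctonion F) (SplitOctonion F) where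
  smul_assoc c x y := by
    ext i <;> try fin_cases i
    all_goals simp [dot, cross, Matrix.vecHead, Matrix.vecTail]; ring

instance : SMulCommClass F (SplitOctonion F) (SplitOctonion F) where
  smul_comm c x y := by
    ext i <;> try fin_cases i
    all_goals simp [dot, cross, Matrix.vecHead, Matrix.vecTail]; ring

lemma mul_self_eq_trO_smul_sub_normO_smul (x : SplitOctonion F) :
    x * x = trO x • x - normO x • 1 := by
  ext i <;> try fin_cases i
  all_goals simp [dot, cross, trO, normO, sub_eq_add_neg]; ring

lemma u1_mul_u1 : (u1 : SplitOctonion F) * u1 = 0 := by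
  ext i <;> try fin_cases i
  all_goals simp [dot, cross, u1]

protected lemma pow_zero (x : SplitOctonion F) : x ^ 0 = 1 := rfl

protected lemma pow_succ (x : SplitOctonion F) (k : ℕ) : x ^ (k + 1) = x ^ k * x := rfl

lemma mul_mem_span_one_self {x z : SplitOctonion F} (hz : z ∈ span F {1, x}) :
    z * x ∈ span F {1, x} := by
  obtain ⟨a, b, rfl⟩ := mem_span_pair.1 hz
  rw [add_mul, smul_mul_assoc, smul_mul_assoc, one_mul, mul_self_eq_trO_smul_sub_normO_smul]
  exact mem_span_pair.2 ⟨-(b * normO x), a + b * trO x, by module⟩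

lemma pow_mem_span_one_self (x : SplitOctonion F) : ∀ k : ℕ, x ^ k ∈ span F {1, x}
  | 0 => subset_span (by simp [SplitOctonion.pow_zero])
  | k + 1 => mul_mem_span_one_self (pow_mem_span_one_self x k)

lemma peval_mem_span_one_self (f : F[X]) (x : SplitOctonion F) :
    peval f x ∈ span F {1, x} :=
  sum_mem fun k _ => smul_mem _ _ (pow_mem_span_one_self x k)

lemma IsAlgAut.map_pow {g : SplitOctonion F ≃ₗ[F] SplitOctonion F} (hg : IsAlgAut g)
    (x : SplitOctonion F) (k : ℕ) : g (x ^ k) = g x ^ k := by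
  induction k with
  | zero => exact hg.1
  | succ k ih => rw [SplitOctonion.pow_succ, hg.2, ih, SplitOctonion.pow_succ]

lemma IsAlgAut.map_peval {g : SplitOctonion F ≃ₗ[F] SplitOctonion F} (hg : IsAlgAut g)
    (f : F[X]) (x : SplitOctonion F) : g (peval f x) = peval f (g x) := by
  simp only [peval, Polynomial.sum_def, map_sum, map_smul, hg.map_pow]

lemma IsAlgAut.preimage_setOf_peval_eq {g : SplitOctonion F ≃ₗ[F] SplitOctonion F}
    (hg : IsAlgAut g) (f : F[X]) (c : SplitOctonion F) :
    g ⁻¹' {y | peval f y = g c} = {x | peval f x = c} := by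
  ext x
  simp only [Set.mem_preimage, Set.mem_ofPred_eq, ← hg.map_peval, g.injective.eq_iff]

lemma smul_one_add_smul_u1_mul (a b l m : F) :
    (a • 1 + b • u1 : SplitOctonion F) * (l • 1 + m • u1) = (a * l) • 1 + (a * m + b * l) • u1 := by
  simp only [add_mul, mul_add, smul_mul_assoc, mul_smul_comm, one_mul, mul_one, u1_mul_u1,
    smul_zero]
  module

lemma smul_one_add_smul_u1_pow (l m : F) :
    ∀ k : ℕ, (l • 1 + m • u1 : SplitOctonion F) ^ k = l ^ k • 1 + (k * l ^ (k - 1) * m) • u1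
  | 0 => by simp [SplitOctonion.pow_zero]
  | k + 1 => by
    rw [SplitOctonion.pow_succ, smul_one_add_smul_u1_pow l m k, smul_one_add_smul_u1_mul]
    cases k <;> simp; ring_nf

lemma peval_smul_one_add_smul_u1 (f : F[X]) (l m : F) :
    peval f (l • 1 + m • u1) = f.eval l • 1 + (f.derivative.eval l * m) • u1 := by
  rw [peval, derivative_eval, eval_eq_sum, Polynomial.sum_def, Polynomial.sum_def,
    Polynomial.sum_def, Finset.sum_mul, Finset.sum_smul, Finset.sum_smul, ← Finset.sum_add_distrib]
  refine Finset.sum_congr rfl fun k _ => ?_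
  rw [smul_one_add_smul_u1_pow, smul_add, smul_smul, smul_smul]
  ring_nf

lemma smul_one_add_smul_u1_inj {a b a' b' : F} :
    a • (1 : SplitOctonion F) + b • u1 = a' • 1 + b' • u1 ↔ a = a' ∧ b = b' := by
  refine ⟨fun h => ⟨?_, ?_⟩, fun ⟨rfl, rfl⟩ => rfl⟩
  · simpa using congrArg x1 h
  · simpa using congrArg (·.u 0) h

lemma exists_eq_of_peval_eq_smul_one_add_u1 {f : F[X]} {γ : F} {y : SplitOctonion F}
    (h : peval f y = γ • 1 + u1) :
    ∃ l, f.eval l = γ ∧ f.derivative.eval l ≠ 0 ∧ y = l • 1 + (f.derivative.eval l)⁻¹ • u1 := by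
  obtain ⟨a, b, hab⟩ := mem_span_pair.1 (peval_mem_span_one_self f y)
  have hab' : a • 1 + b • y = γ • 1 + u1 := hab.trans h
  have hb : b ≠ 0 := by
    rintro rfl
    simpa using congrArg (·.u 0) hab'
  have hy : y = (b⁻¹ * (γ - a)) • 1 + b⁻¹ • u1 :=
    calc y = b⁻¹ • (a • 1 + b • y - a • 1) := by
          rw [add_sub_cancel_left, smul_smul, inv_mul_cancel₀ hb, one_smul]
      _ = _ := by rw [hab']; module
  obtain ⟨hval, hder⟩ := smul_one_add_smul_u1_inj.1 <|
    calc γ • 1 + (1 : F) • u1 = peval f y := by rw [one_smul, h]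
      _ = _ := by rw [hy, peval_smul_one_add_smul_u1]
  refine ⟨_, hval.symm, left_ne_zero_of_mul_eq_one hder.symm, ?_⟩
  rwa [← eq_inv_of_mul_eq_one_right hder.symm]

lemma setOf_peval_eq_smul_one_add_u1_subset [DecidableEq F] (f : F[X]) (γ : F) :
    {y | peval f y = γ • 1 + u1} ⊆
      (fun l => l • 1 + (f.derivative.eval l)⁻¹ • u1) '' ↑(f - C γ).roots.toFinset := by
  intro y hy
  obtain ⟨l, hl, hd, rfl⟩ := exists_eq_of_peval_eq_smul_one_add_u1 hy
  have hne : f - C γ ≠ 0 := fun h => hd (by rw [sub_eq_zero.1 h, derivative_C, eval_zero])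
  exact ⟨l, by simp [mem_roots hne, hl], rfl⟩

end SplitOctonion

open SplitOctonion Polynomial in
theorem card_solutions_le_of_conjugate_nilpotent_type_general {F : Type*} [Field F]
    (f : Polynomial F)
    (c : SplitOctonion F)
    (hc : ∃ γ : F, ∃ g : SplitOctonion F ≃ₗ[F] SplitOctonion F, IsAlgAut g ∧
      g c = γ • (1 : SplitOctonion F) + u1) :
    {x : SplitOctonion F | peval f x = c}.Finite ∧
      {x : SplitOctonion F | peval f x = c}.ncard ≤ f.natDegree := by
  classical
  obtain ⟨γ, g, hg, hgc⟩ := hc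
  set zeros := (f - C γ).roots.toFinset
  have hsub := setOf_peval_eq_smul_one_add_u1_subset f γ
  have hfin : {y | peval f y = γ • 1 + u1}.Finite := (zeros.finite_toSet.image _).subset hsub
  rw [← hg.preimage_setOf_peval_eq, hgc]
  refine ⟨hfin.preimage g.injective.injOn, ?_⟩
  rw [Set.ncard_preimage_of_injective_subset_range g.injective (by simp [g.surjective.range_eq])]
  calc _ ≤ (_ '' (zeros : Set F)).ncard := Set.ncard_le_ncard hsub (zeros.finite_toSet.image _)
    _ ≤ zeros.card := (Set.ncard_image_le zeros.finite_toSet).trans (Set.ncard_coe_finset _).le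
    _ ≤ Multiset.card (f - C γ).roots := Multiset.toFinset_card_le _
    _ ≤ f.natDegree := (card_roots' _).trans natDegree_sub_C.le

open SplitOctonion Polynomial in
/-- if `c` is conjugate to `γ·1 + u₁`, then `f(x) = c` has at most
`n = deg f` solutions. -/
theorem card_solutions_le_of_conjugate_nilpotent_type {F : Type*} [Field F] [IsAlgClosed F]
    (f : Polynomial F) (hf : f ≠ 0) (hdeg : 1 < f.natDegree) (hf0 : f.coeff 0 = 0)
    (c : SplitOctonion F)
    (hc : ∃ γ : F, ∃ g : SplitOctonion F ≃ₗ[F] SplitOctonion F, IsAlgAut g ∧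
      g c = γ • (1 : SplitOctonion F) + u1) :
    {x : SplitOctonion F | peval f x = c}.Finite ∧
      {x : SplitOctonion F | peval f x = c}.ncard ≤ f.natDegree :=
  card_solutions_le_of_conjugate_nilpotent_type_general f c hc
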